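/- In a connected bipartite cubic graph H[A,B], every edge e = ab satisfies exactly one of: (i) e participates in some 2-edge-cut of H, or (ii) the pair (a,b) is λ-matchable, i.e., H has a spanning subgraph in which a and b have degree 3 and every other vertex has degree 1. -/

import Mathlib

/-!
Write `c_A(X)` and `c_B(X)` for the numbers of edges leaving a vertex set `X` from `X ∩ A`
and from `X ∩ B`. Counting edge ends on both sides of a cubic bipartite graph gives
`3 |X ∩ A| + c_B(X) = 3 |X ∩ B| + c_A(X)`. Hence no cut has exactly one edge, and a cut with
at most two edges has `c_A = c_B ≤ 1` and `|X ∩ A| = |X ∩ B|`. The same count in a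
λ-subgraph, where `a` and `b` carry two extra edges, shows that such a cut cannot separate `a`
from `b`; so `ab` lies in no 2-edge-cut.

Conversely, the edges at `a` and `b` together with a perfect matching of the vertices adjacent to
neither form a λ-subgraph, and Hall's theorem, applied from both sides, provides the matching. If
Hall's condition fails for a set `S`, then `S`, `a`, the other neighbours of `a` and the
neighbours of `S` adjacent to neither `a` nor `b` form a set whose only edge leaving from the
`A`-side is `ab`, and the count above makes the cut at this set a 2-edge-cut through `ab`.
-/

open SimpleGraph Set

/-- A graph is cubic (3-regular) if every vertex has exactly 3 neighbours. -/
def IsCubic {V : Type*} (G : SimpleGraph V) : Prop := ∀ v : V, (G.neighborSet v).ncard = 3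

/-- `G` is `k`-connected: more than `k` vertices, and deleting fewer than `k`
vertices leaves a connected graph. -/
def KConnected {V : Type*} (k : ℕ) (G : SimpleGraph V) : Prop :=
  k < Nat.card V ∧ ∀ S : Finset V, S.card < k → (G.induce ((↑S : Set V)ᶜ)).Connected

/-- `G` has a perfect matching. -/
def Matchable {V : Type*} (G : SimpleGraph V) : Prop :=
  ∃ M : G.Subgraph, M.IsPerfectMatching

/-- `G` is matching covered: connected, of order at least two, and every edge
lies in some perfect matching. -/
def MatchingCovered {V : Type*} (G : SimpleGraph V) : Prop :=
  G.Connected ∧ 2 ≤ Nat.card V ∧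
    ∀ e ∈ G.edgeSet, ∃ M : G.Subgraph, M.IsPerfectMatching ∧ e ∈ M.edgeSet

/-- The cut `∂(X)`: edges of `G` with one end in `X` and the other outside `X`. -/
def cutEdges {V : Type*} (G : SimpleGraph V) (X : Set V) : Set (Sym2 V) :=
  {e | e ∈ G.edgeSet ∧ ∃ u v : V, e = s(u, v) ∧ u ∈ X ∧ v ∉ X}

/-- `A`, `B` form a bipartition of `G`. -/
def IsBipartitionOf {V : Type*} (G : SimpleGraph V) (A B : Set V) : Prop :=
  A ∪ B = Set.univ ∧ Disjoint A B ∧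
    ∀ u v : V, G.Adj u v → ((u ∈ A ∧ v ∈ B) ∨ (u ∈ B ∧ v ∈ A))

/-- Number of odd components of `G − B`. -/
noncomputable def coddRemove {V : Type*} (G : SimpleGraph V) (B : Set V) : ℕ :=
  Nat.card {c : (G.induce Bᶜ).ConnectedComponent // Odd c.supp.ncard}

/-- `B` is a barrier of `G`. -/
def IsBarrier {V : Type*} (G : SimpleGraph V) (B : Set V) : Prop :=
  coddRemove G B = B.ncard

/-- `v` is λ-matchable in `G`: there is a spanning subgraph in which `v` has
degree three and every other vertex has degree one. -/
def IsLambdaMatchable {V : Type*} (G : SimpleGraph V) (v : V) : Prop :=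
  ∃ M : G.Subgraph, M.IsSpanning ∧ (M.neighborSet v).ncard = 3 ∧
    ∀ u : V, u ≠ v → (M.neighborSet u).ncard = 1

/-- The pair `(a, b)` is λ-matchable in `G`. -/
def IsLambdaMatchablePair {V : Type*} (G : SimpleGraph V) (a b : V) : Prop :=
  ∃ M : G.Subgraph, M.IsSpanning ∧ (M.neighborSet a).ncard = 3 ∧ (M.neighborSet b).ncard = 3 ∧
    ∀ u : V, u ≠ a → u ≠ b → (M.neighborSet u).ncard = 1

/-- `G` is a tight cut. -/
def IsTightCut {V : Type*} (G : SimpleGraph V) (X : Set V) : Prop :=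
  ∀ M : G.Subgraph, M.IsPerfectMatching → (M.edgeSet ∩ cutEdges G X).ncard = 1

/-- The contraction of `G` obtained by shrinking the complement of `X` to a
single (contraction) vertex, represented by `none`. -/
def contractOut {V : Type*} (G : SimpleGraph V) (X : Set V) : SimpleGraph (Option ↥X) :=
  SimpleGraph.fromRel fun p q =>
    match p, q with
    | some a, some b => G.Adj a.1 b.1
    | some a, none => ∃ w : V, w ∉ X ∧ G.Adj a.1 w
    | none, _ => False

/-- Neighborhood of a set. -/
def setNbhd {V : Type*} (G : SimpleGraph V) (A' : Set V) : Set V :=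
  {v | ∃ a ∈ A', G.Adj a v}

/-- The marked `C`-component on shore `X`, with the marker edge joining `u₁`, `u₂`. -/
def markedComp {V : Type*} (H : SimpleGraph V) (X : Set V) (u₁ u₂ : V) : SimpleGraph ↥X :=
  SimpleGraph.fromRel fun a b => H.Adj a.1 b.1 ∨ (a.1 = u₁ ∧ b.1 = u₂)

open scoped Finset

namespace SimpleGraph

variable {V : Type*} (G : SimpleGraph V) [DecidableRel G.Adj]

theorem card_interedges_union_left [DecidableEq V] {s₁ s₂ : Finset V} (h : Disjoint s₁ s₂)
    (t : Finset V) :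
    #(G.interedges (s₁ ∪ s₂) t) = #(G.interedges s₁ t) + #(G.interedges s₂ t) := by
  rw [← Finset.card_union_of_disjoint (G.interedges_disjoint_left h t)]
  congr 1
  ext
  simp only [mem_interedges_iff, Finset.mem_union]
  tauto

theorem card_interedges_union_right [DecidableEq V] (s : Finset V) {t₁ t₂ : Finset V}
    (h : Disjoint t₁ t₂) :
    #(G.interedges s (t₁ ∪ t₂)) = #(G.interedges s t₁) + #(G.interedges s t₂) := by
  rw [← Finset.card_union_of_disjoint (G.interedges_disjoint_right s h)]
  congr 1
  ext
  simp only [mem_interedges_iff, Finset.mem_union]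
  tauto

theorem card_interedges_le_of_le {G' : SimpleGraph V} [DecidableRel G'.Adj] (hle : G' ≤ G)
    (s t : Finset V) : #(G'.interedges s t) ≤ #(G.interedges s t) :=
  Finset.card_le_card fun _ hp ↦ by
    rw [mem_interedges_iff] at hp ⊢
    exact ⟨hp.1, hp.2.1, hle hp.2.2⟩

theorem sum_ncard_neighborSet_eq_card_interedges [Fintype V] (s : Finset V) :
    ∑ v ∈ s, (G.neighborSet v).ncard = #(G.interedges s Finset.univ) := by
  rw [interedges_def, Finset.card_filter, Finset.sum_product]
  refine Finset.sum_congr rfl fun v _ ↦ ?_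
  rw [← Finset.card_filter, ← neighborFinset_eq_filter, card_neighborFinset_eq_degree,
    ← card_neighborSet_eq_degree, Set.ncard_eq_toFinset_card', Set.toFinset_card]

end SimpleGraph

section Cut

variable {V : Type*} {G : SimpleGraph V} {X : Set V} {u v : V}

theorem mk_mem_cutEdges_iff : s(u, v) ∈ cutEdges G X ↔ G.Adj u v ∧ (u ∈ X ↔ v ∉ X) := by
  simp only [cutEdges, Set.mem_ofPred_eq, mem_edgeSet, Sym2.eq_iff]
  constructor
  · rintro ⟨h, x, y, ⟨rfl, rfl⟩ | ⟨rfl, rfl⟩, hx, hy⟩ <;> tauto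
  · rintro ⟨h, hX⟩
    by_cases hu : u ∈ X
    · exact ⟨h, u, v, Or.inl ⟨rfl, rfl⟩, hu, hX.1 hu⟩
    · exact ⟨h, v, u, Or.inr ⟨rfl, rfl⟩, by tauto, hu⟩

theorem cutEdges_nonempty (hG : G.Connected) (hu : u ∈ X) (hv : v ∉ X) :
    (cutEdges G X).Nonempty := by
  obtain ⟨d, -, hd₁, hd₂⟩ := (hG.preconnected u v).some.exists_boundary_dart X hu hv
  exact ⟨s(d.fst, d.snd), mk_mem_cutEdges_iff.2 ⟨d.adj, iff_of_true hd₁ hd₂⟩⟩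

theorem not_connected_deleteEdges_of_cutEdges_subset {F : Set (Sym2 V)} (hF : cutEdges G X ⊆ F)
    (hu : u ∈ X) (hv : v ∉ X) : ¬(G.deleteEdges F).Connected := fun hG ↦ by
  obtain ⟨e, he⟩ := cutEdges_nonempty hG hu hv
  induction e using Sym2.ind with | h x y => ?_
  rw [mk_mem_cutEdges_iff, deleteEdges_adj] at he
  exact he.1.2 (hF (mk_mem_cutEdges_iff.2 ⟨he.1.1, he.2⟩))

theorem exists_cutEdges_subset_of_not_connected_deleteEdges [Fintype V] [Nonempty V]
    {F : Set (Sym2 V)} (h : ¬(G.deleteEdges F).Connected) :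
    ∃ X : Finset V, ∃ u ∈ X, ∃ v ∉ X, cutEdges G ↑X ⊆ F := by
  classical
  obtain ⟨u, v, huv⟩ : ∃ u v, ¬(G.deleteEdges F).Reachable u v := by
    by_contra! h'
    exact h ⟨h'⟩
  refine ⟨({w | (G.deleteEdges F).Reachable u w} : Finset V), u, by simp, v, by simpa using huv,
    ?_⟩
  intro e he
  induction e using Sym2.ind with | h x y => ?_
  rw [mk_mem_cutEdges_iff] at he
  by_contra hxy
  have hadj : (G.deleteEdges F).Adj x y := (deleteEdges_adj ..).2 ⟨he.1, hxy⟩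
  have : (G.deleteEdges F).Reachable u x ↔ (G.deleteEdges F).Reachable u y :=
    ⟨fun h ↦ h.trans hadj.reachable, fun h ↦ h.trans hadj.symm.reachable⟩
  simp only [Finset.coe_filter, Finset.mem_univ, true_and, Set.mem_ofPred_eq] at he
  tauto

theorem ncard_cutEdges_eq_card_interedges [Fintype V] [DecidableEq V] [DecidableRel G.Adj]
    (X : Finset V) :
    (cutEdges G ↑X).ncard = #(G.interedges X Xᶜ) := by
  have : cutEdges G ↑X = (fun p : V × V ↦ s(p.1, p.2)) '' ↑(G.interedges X Xᶜ) := by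
    ext e
    induction e using Sym2.ind with | h x y => ?_
    simp only [mk_mem_cutEdges_iff, Set.mem_image, Finset.mem_coe, mem_interedges_iff,
      Finset.mem_compl, Prod.exists, Sym2.eq_iff]
    constructor
    · rintro ⟨h, hX⟩
      by_cases hx : x ∈ X
      · exact ⟨x, y, ⟨hx, hX.1 hx, h⟩, Or.inl ⟨rfl, rfl⟩⟩
      · exact ⟨y, x, ⟨by tauto, hx, h.symm⟩, Or.inr ⟨rfl, rfl⟩⟩
    · rintro ⟨x', y', ⟨hx, hy, h⟩, ⟨rfl, rfl⟩ | ⟨rfl, rfl⟩⟩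
      · exact ⟨h, iff_of_true hx hy⟩
      · exact ⟨h.symm, iff_of_false hy (not_not.2 hx)⟩
  rw [this, Set.InjOn.ncard_image, Set.ncard_coe_finset]
  rintro ⟨x, y⟩ hxy ⟨x', y'⟩ hxy' h
  simp only [Finset.mem_coe, mem_interedges_iff, Finset.mem_compl] at hxy hxy'
  rcases Sym2.mk_eq_mk_iff.1 h with h | h
  · exact h
  · simp only [Prod.swap_prod_mk, Prod.mk.injEq] at h
    exact absurd (h.2 ▸ hxy'.1) hxy.2.1

end Cut

section Bipartition

variable {V : Type*} {G G' : SimpleGraph V} {A B : Set V} {u v : V}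

theorem IsBipartitionOf.symm (h : IsBipartitionOf G A B) : IsBipartitionOf G B A :=
  ⟨by rw [Set.union_comm, h.1], h.2.1.symm, fun u v huv ↦ (h.2.2 u v huv).symm⟩

theorem IsBipartitionOf.mono (h : IsBipartitionOf G A B) (hle : G' ≤ G) :
    IsBipartitionOf G' A B :=
  ⟨h.1, h.2.1, fun u v huv ↦ h.2.2 u v (hle huv)⟩

theorem IsBipartitionOf.not_adj (h : IsBipartitionOf G A B) (hu : u ∈ A) (hv : v ∈ A) :
    ¬G.Adj u v := fun huv ↦ by
  rcases h.2.2 u v huv with ⟨-, hv'⟩ | ⟨hu', -⟩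
  exacts [Set.disjoint_left.1 h.2.1 hv hv', Set.disjoint_left.1 h.2.1 hu hu']

theorem IsBipartitionOf.mem_right_of_adj (h : IsBipartitionOf G A B) (hu : u ∈ A)
    (huv : G.Adj u v) : v ∈ B :=
  (h.1 ▸ Set.mem_univ v).resolve_left fun hv ↦ h.not_adj hu hv huv

theorem IsBipartitionOf.disjoint_finset (h : IsBipartitionOf G A B) {P Q : Finset V}
    (hP : ∀ v ∈ P, v ∈ A) (hQ : ∀ v ∈ Q, v ∈ B) : Disjoint P Q :=
  Finset.disjoint_left.2 fun v hvP hvQ ↦ Set.disjoint_left.1 h.2.1 (hP v hvP) (hQ v hvQ)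

theorem IsBipartitionOf.exists_union_eq [DecidableEq V] (h : IsBipartitionOf G A B)
    (X : Finset V) :
    ∃ P Q : Finset V, (∀ v ∈ P, v ∈ A) ∧ (∀ v ∈ Q, v ∈ B) ∧ P ∪ Q = X := by
  classical
  refine ⟨{v ∈ X | v ∈ A}, {v ∈ X | v ∉ A}, fun v hv ↦ (Finset.mem_filter.1 hv).2,
    fun v hv ↦ ?_, Finset.filter_union_filter_not_eq _ _⟩
  exact (h.1 ▸ Set.mem_univ v).resolve_left (Finset.mem_filter.1 hv).2

theorem IsBipartitionOf.sum_ncard_neighborSet_add_card_interedges [Fintype V] [DecidableEq V]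
    [DecidableRel G.Adj] (h : IsBipartitionOf G A B) {P Q : Finset V} (hP : ∀ v ∈ P, v ∈ A)
    (hQ : ∀ v ∈ Q, v ∈ B) :
    ∑ v ∈ P, (G.neighborSet v).ncard + #(G.interedges Q (P ∪ Q)ᶜ) =
      ∑ v ∈ Q, (G.neighborSet v).ncard + #(G.interedges P (P ∪ Q)ᶜ) := by
  have hPQ := h.disjoint_finset hP hQ
  have hPP : G.interedges P P = ∅ := Finset.filter_eq_empty_iff.2 fun p hp ↦ by
    rw [Finset.mem_product] at hp
    exact h.not_adj (hP _ hp.1) (hP _ hp.2)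
  have hQQ : G.interedges Q Q = ∅ := Finset.filter_eq_empty_iff.2 fun p hp ↦ by
    rw [Finset.mem_product] at hp
    exact h.symm.not_adj (hQ _ hp.1) (hQ _ hp.2)
  simp only [G.sum_ncard_neighborSet_eq_card_interedges, ← Finset.union_compl (P ∪ Q),
    G.card_interedges_union_right _ disjoint_compl_right, G.card_interedges_union_right _ hPQ,
    hPP, hQQ, Finset.card_empty]
  have : #(G.interedges Q P) = #(G.interedges P Q) :=
    @Rel.card_interedges_comm _ _ _ G.symm Q P
  omega

end Bipartition

section Cubic

variable {V : Type*} [Fintype V] {G : SimpleGraph V} {A B : Set V}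

theorem IsCubic.three_mul_card_add_card_interedges [DecidableEq V] [DecidableRel G.Adj]
    (hcub : IsCubic G) (h : IsBipartitionOf G A B) {P Q : Finset V} (hP : ∀ v ∈ P, v ∈ A)
    (hQ : ∀ v ∈ Q, v ∈ B) :
    3 * #P + #(G.interedges Q (P ∪ Q)ᶜ) = 3 * #Q + #(G.interedges P (P ∪ Q)ᶜ) := by
  simpa [hcub _, mul_comm] using h.sum_ncard_neighborSet_add_card_interedges hP hQ

theorem IsCubic.card_neighborFinset [DecidableRel G.Adj] (hcub : IsCubic G) (v : V) :
    #(G.neighborFinset v) = 3 := by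
  rw [neighborFinset_def, ← Set.ncard_eq_toFinset_card']
  exact hcub v

theorem IsCubic.ncard_cutEdges_ne_one (hcub : IsCubic G) (h : IsBipartitionOf G A B)
    (X : Finset V) : (cutEdges G ↑X).ncard ≠ 1 := by
  classical
  obtain ⟨P, Q, hP, hQ, rfl⟩ := h.exists_union_eq X
  have := hcub.three_mul_card_add_card_interedges h hP hQ
  rw [ncard_cutEdges_eq_card_interedges, G.card_interedges_union_left (h.disjoint_finset hP hQ)]
  omega

end Cubic

section LambdaPair

variable {V : Type*} {G : SimpleGraph V} {A B : Set V} {a b : V}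

def EdgeInTwoCut (G : SimpleGraph V) (e : Sym2 V) : Prop :=
  ∃ F : Set (Sym2 V), F ⊆ G.edgeSet ∧ F.ncard = 2 ∧ e ∈ F ∧ ¬(G.deleteEdges F).Connected

theorem edgeInTwoCut_of_ncard_cutEdges_eq_two {X : Set V} (hab : G.Adj a b) (ha : a ∈ X)
    (hb : b ∉ X) (h2 : (cutEdges G X).ncard = 2) : EdgeInTwoCut G s(a, b) :=
  ⟨cutEdges G X, fun _ he ↦ he.1, h2, mk_mem_cutEdges_iff.2 ⟨hab, iff_of_true ha hb⟩,
    not_connected_deleteEdges_of_cutEdges_subset subset_rfl ha hb⟩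

theorem sum_ncard_neighborSet_eq_card_add [DecidableEq V] {M : G.Subgraph}
    (h3 : (M.neighborSet a).ncard = 3) (h1 : ∀ u, u ≠ a → u ≠ b → (M.neighborSet u).ncard = 1)
    {S : Finset V} (hb : b ∉ S) :
    ∑ v ∈ S, (M.neighborSet v).ncard = #S + if a ∈ S then 2 else 0 := by
  rw [Finset.card_eq_sum_ones, ← Finset.sum_ite_eq' S a (fun _ ↦ 2), ← Finset.sum_add_distrib]
  refine Finset.sum_congr rfl fun v hv ↦ ?_
  by_cases hva : v = a
  · subst hva
    simp [h3]
  · simp [hva, h1 v hva (ne_of_mem_of_not_mem hv hb)]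

variable [Fintype V]

theorem IsLambdaMatchablePair.mem_iff_mem_of_ncard_cutEdges_le_two
    (hM : IsLambdaMatchablePair G a b) (h : IsBipartitionOf G A B) (hcub : IsCubic G)
    (ha : a ∈ A) (hb : b ∈ B) {X : Finset V} (hX : (cutEdges G ↑X).ncard ≤ 2) :
    a ∈ X ↔ b ∈ X := by
  classical
  obtain ⟨M, -, h3a, h3b, h1⟩ := hM
  obtain ⟨P, Q, hP, hQ, rfl⟩ := h.exists_union_eq X
  have hPQ := h.disjoint_finset hP hQ
  have hbP : b ∉ P := fun hbP ↦ Set.disjoint_left.1 h.2.1 (hP b hbP) hb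
  have haQ : a ∉ Q := fun haQ ↦ Set.disjoint_left.1 h.2.1 ha (hQ a haQ)
  have hG := hcub.three_mul_card_add_card_interedges h hP hQ
  have hMG := (h.mono M.spanningCoe_le).sum_ncard_neighborSet_add_card_interedges hP hQ
  have hmP := G.card_interedges_le_of_le M.spanningCoe_le P (P ∪ Q)ᶜ
  have hmQ := G.card_interedges_le_of_le M.spanningCoe_le Q (P ∪ Q)ᶜ
  change ∑ v ∈ P, (M.neighborSet v).ncard + _ = ∑ v ∈ Q, (M.neighborSet v).ncard + _ at hMG
  rw [sum_ncard_neighborSet_eq_card_add h3a h1 hbP,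
    sum_ncard_neighborSet_eq_card_add h3b (fun u hub hua ↦ h1 u hua hub) haQ] at hMG
  rw [ncard_cutEdges_eq_card_interedges, G.card_interedges_union_left hPQ] at hX
  simp only [Finset.mem_union, haQ, hbP, or_false, false_or]
  split_ifs at hMG with haP hbQ hbQ
  · exact iff_of_true haP hbQ
  · omega
  · omega
  · exact iff_of_false haP hbQ

theorem EdgeInTwoCut.not_isLambdaMatchablePair (hcut : EdgeInTwoCut G s(a, b))
    (h : IsBipartitionOf G A B) (hconn : G.Connected) (hcub : IsCubic G) (ha : a ∈ A)
    (hb : b ∈ B) : ¬IsLambdaMatchablePair G a b := by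
  intro hM
  obtain ⟨F, -, hF, habF, hdisc⟩ := hcut
  have := hconn.nonempty
  obtain ⟨X, u, hu, v, hv, hXF⟩ := exists_cutEdges_subset_of_not_connected_deleteEdges hdisc
  have hab : s(a, b) ∉ cutEdges G ↑X := by
    have := hM.mem_iff_mem_of_ncard_cutEdges_le_two h hcub ha hb (hF ▸ Set.ncard_le_ncard hXF)
    rw [mk_mem_cutEdges_iff, Finset.mem_coe, Finset.mem_coe]
    tauto
  have hle : (cutEdges G ↑X).ncard ≤ 1 :=
    calc (cutEdges G ↑X).ncard ≤ (F \ {s(a, b)}).ncard :=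
          Set.ncard_le_ncard (Set.subset_sdiff_singleton hXF hab)
      _ = 1 := by rw [Set.ncard_sdiff_singleton_of_mem habF, hF]
  have hpos := (Set.ncard_pos (Set.toFinite _)).2 (cutEdges_nonempty hconn (X := ↑X) hu hv)
  exact hcub.ncard_cutEdges_ne_one h X (by omega)

end LambdaPair

section Hall

variable {V : Type*} [DecidableEq V] {G : SimpleGraph V} [DecidableRel G.Adj] {s t : Finset V}

theorem exists_injective_of_forall_card_le
    (h : ∀ S ⊆ s, #S ≤ #{y ∈ t | ∃ x ∈ S, G.Adj x y}) :
    ∃ f : s → t, Function.Injective f ∧ ∀ x : s, G.Adj x (f x) := by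
  obtain ⟨f, hf, hft⟩ := (Finset.all_card_le_biUnion_card_iff_exists_injective
    fun x : s ↦ {y ∈ t | G.Adj x y}).1 fun S ↦ by
      have hS : S.map (Function.Embedding.subtype _) ⊆ s := fun x hx ↦ by
        obtain ⟨y, -, rfl⟩ := Finset.mem_map.1 hx
        exact y.2
      convert h _ hS using 2
      · rw [Finset.card_map]
      · ext y
        simp only [Finset.mem_biUnion, Finset.mem_filter, Finset.mem_map]
        aesop
  exact ⟨fun x ↦ ⟨f x, (Finset.mem_filter.1 (hft x)).1⟩,
    fun x y hxy ↦ hf (congrArg Subtype.val hxy), fun x ↦ (Finset.mem_filter.1 (hft x)).2⟩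

theorem exists_isMatching_of_forall_card_le (hst : Disjoint s t)
    (hs : ∀ S ⊆ s, #S ≤ #{y ∈ t | ∃ x ∈ S, G.Adj x y})
    (ht : ∀ T ⊆ t, #T ≤ #{x ∈ s | ∃ y ∈ T, G.Adj y x}) :
    ∃ M : G.Subgraph, M.verts = ↑s ∪ ↑t ∧ M.IsMatching := by
  obtain ⟨f, hf, hfG⟩ := exists_injective_of_forall_card_le hs
  obtain ⟨g, hg, -⟩ := exists_injective_of_forall_card_le ht
  have hbij : Function.Bijective f := (Fintype.bijective_iff_injective_and_card f).2
    ⟨hf, le_antisymm (Fintype.card_le_of_injective f hf) (Fintype.card_le_of_injective g hg)⟩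
  exact Subgraph.IsMatching.exists_of_disjoint_sets_of_equiv (Finset.disjoint_coe.2 hst)
    (Equiv.ofBijective f hbij) hfG

end Hall

section Construction

variable {V : Type*} {G : SimpleGraph V} {a b u : V}

theorem ncard_setOf_adj_and_eq_or_eq (hcommon : ∀ v, G.Adj a v → ¬G.Adj b v)
    (hu : G.Adj a u ∨ G.Adj b u) : {w | G.Adj u w ∧ (w = a ∨ w = b)}.ncard = 1 := by
  rw [Set.ncard_eq_one]
  rcases hu with hau | hbu
  · refine ⟨a, Set.ext fun w ↦ ⟨?_, ?_⟩⟩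
    · rintro ⟨h, rfl | rfl⟩
      exacts [rfl, (hcommon u hau h.symm).elim]
    · rintro rfl
      exact ⟨hau.symm, Or.inl rfl⟩
  · refine ⟨b, Set.ext fun w ↦ ⟨?_, ?_⟩⟩
    · rintro ⟨h, rfl | rfl⟩
      exacts [(hcommon u h.symm hbu).elim, rfl]
    · rintro rfl
      exact ⟨hbu.symm, Or.inr rfl⟩

theorem isLambdaMatchablePair_of_isMatching (hcub : IsCubic G) (hab : G.Adj a b)
    (hcommon : ∀ v, G.Adj a v → ¬G.Adj b v) {M₀ : G.Subgraph} (hM₀ : M₀.IsMatching)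
    (hverts : ∀ v, v ∈ M₀.verts ↔ ¬G.Adj a v ∧ ¬G.Adj b v) :
    IsLambdaMatchablePair G a b := by
  let M : G.Subgraph :=
    { verts := univ
      Adj u v := G.Adj u v ∧ (u = a ∨ u = b ∨ v = a ∨ v = b) ∨ M₀.Adj u v
      adj_sub := by
        rintro u v (h | h)
        exacts [h.1, M₀.adj_sub h]
      edge_vert := fun _ ↦ mem_univ _
      symm := ⟨fun u v h ↦ h.imp (fun h ↦ ⟨h.1.symm, by tauto⟩) (fun h ↦ h.symm)⟩ }
  have hstar : ∀ {u}, u ∉ M₀.verts →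
      M.neighborSet u = {w | G.Adj u w ∧ (u = a ∨ u = b ∨ w = a ∨ w = b)} := fun hu ↦ by
    ext w
    simp only [Subgraph.mem_neighborSet, M, Set.mem_ofPred_eq, or_iff_left_iff_imp]
    exact fun h ↦ absurd (M₀.edge_vert h) hu
  refine ⟨M, fun _ ↦ trivial, ?_, ?_, fun u hua hub ↦ ?_⟩
  · rw [hstar (by simp [hverts, hab.symm])]
    simp only [true_or, and_true]
    exact hcub a
  · rw [hstar (by simp [hverts, hab])]
    simp only [true_or, or_true, and_true]
    exact hcub b
  by_cases hu : u ∈ M₀.verts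
  · obtain ⟨w, hw, hw'⟩ := hM₀ hu
    have hnot := (hverts u).1 hu
    suffices M.neighborSet u = {w} by rw [this, ncard_singleton]
    ext x
    simp only [Subgraph.mem_neighborSet, M, mem_singleton_iff]
    constructor
    · rintro (⟨hux, rfl | rfl | rfl | rfl⟩ | h)
      exacts [(hua rfl).elim, (hub rfl).elim, (hnot.1 hux.symm).elim, (hnot.2 hux.symm).elim,
        hw' x h]
    · rintro rfl
      exact Or.inr hw
  · rw [hstar hu]
    rw [hverts, not_and_or, not_not, not_not] at hu
    simpa only [hua, hub, false_or] using ncard_setOf_adj_and_eq_or_eq hcommon hu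

end Construction

section HallCondition

variable {V : Type*} [Fintype V] [DecidableEq V] {G : SimpleGraph V} [DecidableRel G.Adj]
  {A B : Set V} [DecidablePred (· ∈ A)] [DecidablePred (· ∈ B)] {a b : V}

theorem interedges_insert_compl_eq_singleton {S Q : Finset V} (hab : G.Adj a b)
    (hb : b ∉ insert a S ∪ (Q ∪ (G.neighborFinset a).erase b))
    (hS : ∀ x ∈ S, ∀ y, G.Adj x y → y ∉ Q → G.Adj a y ∧ y ≠ b) :
    G.interedges (insert a S) (insert a S ∪ (Q ∪ (G.neighborFinset a).erase b))ᶜ = {(a, b)} := by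
  ext ⟨x, y⟩
  simp only [mem_interedges_iff, Finset.mem_compl, Finset.mem_singleton, Prod.mk.injEq]
  constructor
  · rintro ⟨hx, hy, hxy⟩
    have hyX : G.Adj a y → y ≠ b → y ∈ insert a S ∪ (Q ∪ (G.neighborFinset a).erase b) :=
      fun hay hyb ↦ Finset.mem_union_right _ (Finset.mem_union_right _
        (Finset.mem_erase.2 ⟨hyb, (mem_neighborFinset _ _ _).2 hay⟩))
    rcases Finset.mem_insert.1 hx with rfl | hxS
    · exact ⟨rfl, not_not.1 fun hyb ↦ hy (hyX hxy hyb)⟩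
    · by_cases hyQ : y ∈ Q
      · exact absurd (Finset.mem_union_right _ (Finset.mem_union_left _ hyQ)) hy
      · exact absurd (hyX (hS x hxS y hxy hyQ).1 (hS x hxS y hxy hyQ).2) hy
  · rintro ⟨rfl, rfl⟩
    exact ⟨Finset.mem_insert_self _ _, hb, hab⟩

theorem card_le_card_neighbors_of_not_edgeInTwoCut (h : IsBipartitionOf G A B)
    (hcub : IsCubic G) (ha : a ∈ A) (hab : G.Adj a b) (hcut : ¬EdgeInTwoCut G s(a, b))
    {S : Finset V} (hS : S ⊆ ({x | x ∈ A ∧ ¬G.Adj b x} : Finset V)) :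
    #S ≤ #{y ∈ ({y | y ∈ B ∧ ¬G.Adj a y} : Finset V) | ∃ x ∈ S, G.Adj x y} := by
  set N := {y ∈ ({y | y ∈ B ∧ ¬G.Adj a y} : Finset V) | ∃ x ∈ S, G.Adj x y}
  by_contra! hlt
  simp only [Finset.subset_iff, Finset.mem_filter, Finset.mem_univ, true_and] at hS
  have hN : ∀ y, y ∈ N ↔ y ∈ B ∧ ¬G.Adj a y ∧ ∃ x ∈ S, G.Adj x y := by simp [N, and_assoc]
  set P := insert a S
  set Q := N ∪ (G.neighborFinset a).erase b
  have hP : ∀ v ∈ P, v ∈ A := by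
    simpa [P] using ⟨ha, fun v hv ↦ (hS hv).1⟩
  have hQ : ∀ v ∈ Q, v ∈ B := by
    simp only [Q, Finset.mem_union, Finset.mem_erase, mem_neighborFinset]
    rintro v (hv | ⟨-, hav⟩)
    exacts [((hN v).1 hv).1, h.mem_right_of_adj ha hav]
  have hbX : b ∉ P ∪ Q := by
    simp only [P, Q, Finset.mem_union, Finset.mem_insert, Finset.mem_erase, hN, not_or]
    exact ⟨⟨hab.ne', fun hbS ↦ h.not_adj (hS hbS).1 ha hab.symm⟩, fun hbN ↦ hbN.2.1 hab,
      fun h ↦ h.1 rfl⟩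
  have hout : G.interedges P (P ∪ Q)ᶜ = {(a, b)} :=
    interedges_insert_compl_eq_singleton hab hbX fun x hxS y hxy hyN ↦ by
      refine ⟨not_not.1 fun hay ↦ hyN ((hN y).2 ?_), ?_⟩
      · exact ⟨h.mem_right_of_adj (hS hxS).1 hxy, hay, x, hxS, hxy⟩
      · rintro rfl
        exact (hS hxS).2 hxy.symm
  have hNa : Disjoint N ((G.neighborFinset a).erase b) := Finset.disjoint_left.2 fun y hy hy' ↦
    ((hN y).1 hy).2.1 ((mem_neighborFinset _ _ _).1 (Finset.mem_of_mem_erase hy'))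
  have hbal := hcub.three_mul_card_add_card_interedges h hP hQ
  rw [hout, Finset.card_singleton, Finset.card_insert_of_notMem fun haS ↦ (hS haS).2 hab.symm,
    Finset.card_union_of_disjoint hNa, Finset.card_erase_of_mem ((mem_neighborFinset _ _ _).2 hab),
    hcub.card_neighborFinset] at hbal
  refine hcut (edgeInTwoCut_of_ncard_cutEdges_eq_two (X := ↑(P ∪ Q)) hab
    (Finset.mem_union_left _ (Finset.mem_insert_self _ _)) (Finset.mem_coe.not.2 hbX) ?_)
  rw [ncard_cutEdges_eq_card_interedges, G.card_interedges_union_left (h.disjoint_finset hP hQ),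
    hout, Finset.card_singleton]
  omega

end HallCondition

/-- in a connected bipartite cubic graph `H[A,B]`, every edge
`e = ab` satisfies exactly one of: `e` participates in a 2-edge-cut, or the
pair `(a, b)` is λ-matchable. -/
theorem edge_in_two_cut_xor_pair_lambdaMatchable {V : Type*} [Fintype V]
    (H : SimpleGraph V) (A B : Set V) (hbip : IsBipartitionOf H A B)
    (hconn : H.Connected) (hcub : IsCubic H)
    (a b : V) (ha : a ∈ A) (hb : b ∈ B) (hab : H.Adj a b) :
    Xor'
      (∃ F : Set (Sym2 V), F ⊆ H.edgeSet ∧ F.ncard = 2 ∧ s(a, b) ∈ F ∧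
        ¬ (H.deleteEdges F).Connected)
      (IsLambdaMatchablePair H a b) := by
  classical
  by_cases hcut : EdgeInTwoCut H s(a, b)
  · exact Or.inl ⟨hcut, hcut.not_isLambdaMatchablePair hbip hconn hcub ha hb⟩
  refine Or.inr ⟨?_, hcut⟩
  obtain ⟨M₀, hverts, hM₀⟩ := exists_isMatching_of_forall_card_le (G := H)
    (s := {x | x ∈ A ∧ ¬H.Adj b x}) (t := {y | y ∈ B ∧ ¬H.Adj a y})
    (Finset.disjoint_filter.2 fun v _ hv hv' ↦ Set.disjoint_left.1 hbip.2.1 hv.1 hv'.1)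
    (fun S hS ↦ card_le_card_neighbors_of_not_edgeInTwoCut hbip hcub ha hab hcut hS)
    (fun T hT ↦ card_le_card_neighbors_of_not_edgeInTwoCut hbip.symm hcub hb hab.symm
      (by rwa [Sym2.eq_swap]) hT)
  refine isLambdaMatchablePair_of_isMatching hcub hab
    (fun v hav hbv ↦ hbip.not_adj (hbip.symm.mem_right_of_adj hb hbv) ha hav.symm) hM₀ fun v ↦ ?_
  simp only [hverts, Set.mem_union, Finset.coe_filter, Finset.mem_univ, true_and,
    Set.mem_ofPred_eq]
  constructor
  · rintro (⟨hv, hbv⟩ | ⟨hv, hav⟩)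
    exacts [⟨fun hav ↦ hbip.not_adj ha hv hav, hbv⟩, ⟨hav, fun hbv ↦ hbip.symm.not_adj hb hv hbv⟩]
  · rintro ⟨hav, hbv⟩
    exact (hbip.1 ▸ Set.mem_univ v).imp (⟨·, hbv⟩) (⟨·, hav⟩)
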